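/- The radial vector field X(x) = x − a is almost conformal for g = fI + p: the matrix field L_X g(x) := (D g(x))[x−a] + 2 g(x) (directional derivative of g along x−a plus 2g) satisfies |L_X g(x) − 2 ξ(x) g(x)| ≤ C' |x|^{−2−ε} for all large |x| and some constant C', where ξ(x) = 1 + (∇f(x)·(x−a))/(2 f(x)). -/

import Mathlib

/-! Since `g = f I + p`, the scalar part of `g` is exactly conformal for `X = x - a`: by the
definition of `ξ`, `L_X (f I) = (Df[X] + 2f) I = 2ξ f I`. Hence
`L_X g - 2ξ g = Dp[X] - (Df[X] / f) p`. Now `|X| ≤ 2|x|`, `f → 1` and `Df = O(|x|⁻²)`, so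
`Df[X] / f` stays bounded, while `Dp[X] = O(|x| ⋅ |x|^(-3-ε))` and `p = O(|x|^(-2-ε))`. -/

open Real Matrix

noncomputable section

abbrev E3 := EuclideanSpace ℝ (Fin 3)

def pd (k : Fin 3) (f : E3 → ℝ) (x : E3) : ℝ :=
  fderiv ℝ f x (EuclideanSpace.single k 1)

open scoped RealInnerProductSpace

section InnerProductSpace

variable {E : Type*} [NormedAddCommGroup E] [InnerProductSpace ℝ E]

theorem differentiableAt_norm_of_ne_zero {x : E} (hx : x ≠ 0) : DifferentiableAt ℝ (‖·‖) x :=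
  (contDiffAt_norm ℝ hx).differentiableAt one_ne_zero

-- The derivative of the norm is kept abstract: all the estimates need is that it has norm `1`.
theorem hasFDerivAt_norm_zpow (n : ℤ) {x : E} (hx : x ≠ 0) :
    HasFDerivAt (fun y => ‖y‖ ^ n) ((n * ‖x‖ ^ (n - 1)) • fderiv ℝ (‖·‖) x) x :=
  (hasDerivAt_zpow n ‖x‖ (.inl (norm_ne_zero_iff.mpr hx))).comp_hasFDerivAt x
    (differentiableAt_norm_of_ne_zero hx).hasFDerivAt

theorem norm_fderiv_norm_of_ne_zero {x : E} (hx : x ≠ 0) : ‖fderiv ℝ (‖·‖) x‖ = 1 :=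
  haveI := nontrivial_of_ne x 0 hx
  norm_fderiv_norm (differentiableAt_norm_of_ne_zero hx)

def conformalFactor (m γ₁ γ₂ : ℝ) (c x : E) : ℝ :=
  1 + 2 * m / ‖x‖ + γ₁ * ⟪c, x⟫ / ‖x‖ ^ 3 + γ₂ / ‖x‖ ^ 2

variable (m γ₁ γ₂ : ℝ) (c : E)

theorem hasFDerivAt_conformalFactor {x : E} (hx : x ≠ 0) :
    HasFDerivAt (conformalFactor m γ₁ γ₂ c)
      ((-(2 * m / ‖x‖ ^ 2 + 3 * γ₁ * ⟪c, x⟫ / ‖x‖ ^ 4 + 2 * γ₂ / ‖x‖ ^ 3)) • fderiv ℝ (‖·‖) x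
        + (γ₁ / ‖x‖ ^ 3) • innerSL ℝ c) x := by
  have h := (((hasFDerivAt_const 1 x).add ((hasFDerivAt_norm_zpow (-1) hx).const_mul (2 * m))).add
    ((((innerSL ℝ c).hasFDerivAt).mul (hasFDerivAt_norm_zpow (-3) hx)).const_mul γ₁)).add
    ((hasFDerivAt_norm_zpow (-2) hx).const_mul γ₂)
  refine HasFDerivAt.congr_fderiv (h.congr_of_eventuallyEq (.of_forall fun y => ?_)) ?_
  · simp only [conformalFactor, Pi.add_apply, Pi.mul_apply, innerSL_apply_apply, _root_.zpow_neg,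
      zpow_ofNat]
    ring
  · ext v
    simp only [Int.reduceNeg, Int.cast_neg, Int.cast_one, Int.reduceSub, _root_.zpow_neg,
      zpow_ofNat, neg_mul, one_mul, neg_smul, smul_neg, zero_add, coe_innerSL_apply,
      Int.cast_ofNat, smul_add, _root_.add_apply, _root_.neg_apply, _root_.smul_apply,
      smul_eq_mul, neg_add_rev]
    ring

theorem abs_mul_inner_div_pow_le {x : E} (hx : 1 ≤ ‖x‖) (a : ℝ) (k : ℕ) :
    |a * ⟪c, x⟫ / ‖x‖ ^ (k + 1)| ≤ |a| * ‖c‖ / ‖x‖ ^ k := by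
  have hr : 0 < ‖x‖ := one_pos.trans_le hx
  rw [abs_div, abs_mul, abs_of_pos (pow_pos hr _), pow_succ, ← div_div, div_right_comm,
    mul_div_assoc]
  gcongr
  exact (div_le_iff₀ hr).mpr (abs_real_inner_le_norm c x)

theorem norm_fderiv_conformalFactor_le {x : E} (hx : 1 ≤ ‖x‖) :
    ‖fderiv ℝ (conformalFactor m γ₁ γ₂ c) x‖ ≤ (2 * |m| + 4 * |γ₁| * ‖c‖ + 2 * |γ₂|) / ‖x‖ ^ 2 := by
  have hr : 0 < ‖x‖ := one_pos.trans_le hx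
  have hx0 : x ≠ 0 := norm_pos_iff.mp hr
  have hdecay {a : ℝ} (ha : 0 ≤ a) {k : ℕ} (hk : 2 ≤ k) : a / ‖x‖ ^ k ≤ a / ‖x‖ ^ 2 :=
    div_le_div_of_nonneg_left ha (by positivity) (pow_le_pow_right₀ hx hk)
  have habs (a : ℝ) (k : ℕ) : |a / ‖x‖ ^ k| = |a| / ‖x‖ ^ k := by
    rw [abs_div, abs_of_pos (pow_pos hr k)]
  have h₁ : |2 * m / ‖x‖ ^ 2| = 2 * |m| / ‖x‖ ^ 2 := by rw [habs, abs_mul, abs_two]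
  have h₂ : |3 * γ₁ * ⟪c, x⟫ / ‖x‖ ^ 4| ≤ 3 * |γ₁| * ‖c‖ / ‖x‖ ^ 2 :=
    calc _ ≤ |3 * γ₁| * ‖c‖ / ‖x‖ ^ 3 := abs_mul_inner_div_pow_le c hx _ 3
      _ = 3 * |γ₁| * ‖c‖ / ‖x‖ ^ 3 := by rw [abs_mul, abs_of_pos three_pos]
      _ ≤ _ := hdecay (by positivity) (by norm_num)
  have h₃ : |2 * γ₂ / ‖x‖ ^ 3| ≤ 2 * |γ₂| / ‖x‖ ^ 2 := by
    rw [habs, abs_mul, abs_two]; exact hdecay (by positivity) (by norm_num)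
  have h₄ : |γ₁ / ‖x‖ ^ 3| * ‖c‖ ≤ |γ₁| * ‖c‖ / ‖x‖ ^ 2 := by
    rw [habs, div_mul_eq_mul_div]; exact hdecay (by positivity) (by norm_num)
  rw [(hasFDerivAt_conformalFactor m γ₁ γ₂ c hx0).fderiv]
  calc _ ≤ ‖(-(2 * m / ‖x‖ ^ 2 + 3 * γ₁ * ⟪c, x⟫ / ‖x‖ ^ 4 + 2 * γ₂ / ‖x‖ ^ 3)) • fderiv ℝ (‖·‖) x‖
        + ‖(γ₁ / ‖x‖ ^ 3) • innerSL ℝ c‖ := norm_add_le _ _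
    _ = |2 * m / ‖x‖ ^ 2 + 3 * γ₁ * ⟪c, x⟫ / ‖x‖ ^ 4 + 2 * γ₂ / ‖x‖ ^ 3|
        + |γ₁ / ‖x‖ ^ 3| * ‖c‖ := by
      rw [norm_smul, norm_smul, norm_fderiv_norm_of_ne_zero hx0, innerSL_apply_norm,
        Real.norm_eq_abs, Real.norm_eq_abs, abs_neg, mul_one]
    _ ≤ _ := by
      have := abs_add_three (2 * m / ‖x‖ ^ 2) (3 * γ₁ * ⟪c, x⟫ / ‖x‖ ^ 4) (2 * γ₂ / ‖x‖ ^ 3)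
      rw [show (2 * |m| + 4 * |γ₁| * ‖c‖ + 2 * |γ₂|) / ‖x‖ ^ 2 = 2 * |m| / ‖x‖ ^ 2
        + 3 * |γ₁| * ‖c‖ / ‖x‖ ^ 2 + 2 * |γ₂| / ‖x‖ ^ 2 + |γ₁| * ‖c‖ / ‖x‖ ^ 2 by ring]
      linarith

theorem abs_conformalFactor_sub_one_le {x : E} (hx : 1 ≤ ‖x‖) :
    |conformalFactor m γ₁ γ₂ c x - 1| ≤ (2 * |m| + |γ₁| * ‖c‖ + |γ₂|) / ‖x‖ := by
  have hr : 0 < ‖x‖ := one_pos.trans_le hx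
  have h₁ : |2 * m / ‖x‖| = 2 * |m| / ‖x‖ := by rw [abs_div, abs_mul, abs_two, abs_of_pos hr]
  have h₂ : |γ₁ * ⟪c, x⟫ / ‖x‖ ^ 3| ≤ |γ₁| * ‖c‖ / ‖x‖ :=
    (abs_mul_inner_div_pow_le c hx γ₁ 2).trans
      (div_le_div_of_nonneg_left (by positivity) hr (le_self_pow₀ hx two_ne_zero))
  have h₃ : |γ₂ / ‖x‖ ^ 2| ≤ |γ₂| / ‖x‖ := by
    rw [abs_div, abs_of_pos (pow_pos hr 2)]
    exact div_le_div_of_nonneg_left (abs_nonneg _) hr (le_self_pow₀ hx two_ne_zero)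
  have := abs_add_three (2 * m / ‖x‖) (γ₁ * ⟪c, x⟫ / ‖x‖ ^ 3) (γ₂ / ‖x‖ ^ 2)
  rw [show conformalFactor m γ₁ γ₂ c x - 1 = 2 * m / ‖x‖ + γ₁ * ⟪c, x⟫ / ‖x‖ ^ 3 + γ₂ / ‖x‖ ^ 2 by
      rw [conformalFactor]; ring,
    show (2 * |m| + |γ₁| * ‖c‖ + |γ₂|) / ‖x‖
      = 2 * |m| / ‖x‖ + |γ₁| * ‖c‖ / ‖x‖ + |γ₂| / ‖x‖ by ring]
  linarith

theorem half_le_conformalFactor {x : E} (hx : 1 ≤ ‖x‖)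
    (hxM : 2 * (2 * |m| + |γ₁| * ‖c‖ + |γ₂|) ≤ ‖x‖) : 1 / 2 ≤ conformalFactor m γ₁ γ₂ c x := by
  have h := abs_le.mp (abs_conformalFactor_sub_one_le m γ₁ γ₂ c hx)
  have : (2 * |m| + |γ₁| * ‖c‖ + |γ₂|) / ‖x‖ ≤ 1 / 2 := by
    rw [div_le_iff₀ (one_pos.trans_le hx)]; linarith
  linarith

theorem abs_fderiv_conformalFactor_sub_div_le {x a : E} (h2 : 2 ≤ ‖x‖) (ha : ‖a‖ ≤ ‖x‖)
    (hM : 2 * (2 * |m| + |γ₁| * ‖c‖ + |γ₂|) ≤ ‖x‖) :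
    |fderiv ℝ (conformalFactor m γ₁ γ₂ c) x (x - a) / conformalFactor m γ₁ γ₂ c x|
      ≤ 2 * (2 * |m| + 4 * |γ₁| * ‖c‖ + 2 * |γ₂|) := by
  set K := 2 * |m| + 4 * |γ₁| * ‖c‖ + 2 * |γ₂|
  have hx1 : 1 ≤ ‖x‖ := by linarith
  have hr : 0 < ‖x‖ := by linarith
  have hf := half_le_conformalFactor m γ₁ γ₂ c hx1 hM
  have hD : |fderiv ℝ (conformalFactor m γ₁ γ₂ c) x (x - a)| ≤ K :=
    calc _ ≤ ‖fderiv ℝ (conformalFactor m γ₁ γ₂ c) x‖ * ‖x - a‖ := by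
          rw [← Real.norm_eq_abs]; exact ContinuousLinearMap.le_opNorm _ _
      _ ≤ K / ‖x‖ ^ 2 * (2 * ‖x‖) := by
          gcongr
          · exact norm_fderiv_conformalFactor_le m γ₁ γ₂ c hx1
          · exact (norm_sub_le x a).trans (by linarith)
      _ = 2 * K / ‖x‖ := by field_simp
      _ ≤ K := by rw [div_le_iff₀ hr]; nlinarith [show 0 ≤ K by positivity]
  have hf0 : 0 < conformalFactor m γ₁ γ₂ c x := by linarith
  rw [abs_div, abs_of_pos hf0, div_le_iff₀ hf0]
  nlinarith [show 0 ≤ K by positivity]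

end InnerProductSpace

theorem fderiv_mul_add_sub_conformal {F : Type*} [NormedAddCommGroup F] [NormedSpace ℝ F]
    {f q : F → ℝ} {x : F} (hf : DifferentiableAt ℝ f x) (hq : DifferentiableAt ℝ q x)
    (hfx : f x ≠ 0) (δ : ℝ) (v : F) :
    fderiv ℝ (fun y => f y * δ + q y) x v + 2 * (f x * δ + q x)
      - 2 * (1 + fderiv ℝ f x v / (2 * f x)) * (f x * δ + q x)
      = fderiv ℝ q x v - fderiv ℝ f x v / f x * q x := by
  rw [((hf.hasFDerivAt.mul_const δ).fun_add hq.hasFDerivAt).fderiv]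
  simp only [_root_.add_apply, _root_.smul_apply, smul_eq_mul]
  field_simp
  ring

theorem abs_apply_le_card_mul {ι : Type*} [Fintype ι] [DecidableEq ι]
    (L : EuclideanSpace ℝ ι →L[ℝ] ℝ) {A : ℝ} (hA : ∀ k, |L (EuclideanSpace.single k 1)| ≤ A)
    (v : EuclideanSpace ℝ ι) : |L v| ≤ Fintype.card ι * A * ‖v‖ :=
  calc |L v| = |∑ k, v k * L (EuclideanSpace.single k 1)| := by
        conv_lhs => rw [← (EuclideanSpace.basisFun ι ℝ).sum_repr v]
        simp [map_sum]
    _ ≤ ∑ k, |v k| * |L (EuclideanSpace.single k 1)| := by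
        simpa only [abs_mul] using
          Finset.abs_sum_le_sum_abs (fun k => v k * L (EuclideanSpace.single k 1)) Finset.univ
    _ ≤ ∑ _k : ι, ‖v‖ * A := by
        gcongr with k
        · rw [← Real.norm_eq_abs]; exact PiLp.norm_apply_le v k
        · exact hA k
    _ = Fintype.card ι * A * ‖v‖ := by rw [Finset.sum_const, Finset.card_univ, nsmul_eq_mul]; ring

theorem abs_fderiv_apply_sub_le_of_abs_pd_le {q : E3 → ℝ} {x a : E3} {C ε : ℝ}
    (hx : 0 < ‖x‖) (ha : ‖a‖ ≤ ‖x‖) (hq : ∀ k, |pd k q x| ≤ C * ‖x‖ ^ (-3 - ε)) :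
    |fderiv ℝ q x (x - a)| ≤ 6 * C * ‖x‖ ^ (-2 - ε) := by
  have hA : 0 ≤ C * ‖x‖ ^ (-3 - ε) := (abs_nonneg _).trans (hq 0)
  calc _ ≤ 3 * (C * ‖x‖ ^ (-3 - ε)) * ‖x - a‖ := by
        simpa using abs_apply_le_card_mul (fderiv ℝ q x) hq (x - a)
    _ ≤ 3 * (C * ‖x‖ ^ (-3 - ε)) * (2 * ‖x‖) := by
        gcongr; exact (norm_sub_le x a).trans (by linarith)
    _ = 6 * C * ‖x‖ ^ (-2 - ε) := by
        rw [show -2 - ε = -3 - ε + 1 by ring, Real.rpow_add_one hx.ne']; ring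

theorem radial_field_almost_conformal_general
    (m γ₁ γ₂ : ℝ) (a c : E3) (ε : ℝ)
    (f : E3 → ℝ)
    (hf : ∀ x : E3,
      f x = 1 + 2 * m / ‖x‖ + γ₁ * (∑ i, c i * x i) / ‖x‖ ^ 3 + γ₂ / ‖x‖ ^ 2)
    (p : E3 → Matrix (Fin 3) (Fin 3) ℝ)
    (hpC1 : ∀ i j, ContDiffOn ℝ 1 (fun x => p x i j) {x : E3 | 1 < ‖x‖})
    (C : ℝ)
    (hp0 : ∀ x : E3, 1 < ‖x‖ → ∀ i j, |p x i j| ≤ C * ‖x‖ ^ (-2 - ε))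
    (hp1 : ∀ x : E3, 1 < ‖x‖ → ∀ i j k,
      |pd k (fun y => p y i j) x| ≤ C * ‖x‖ ^ (-3 - ε))
    (g : E3 → Matrix (Fin 3) (Fin 3) ℝ)
    (hg : ∀ x : E3, g x = f x • (1 : Matrix (Fin 3) (Fin 3) ℝ) + p x)
    (ξ : E3 → ℝ)
    (hξ : ∀ x : E3, ξ x = 1 + (fderiv ℝ f x) (x - a) / (2 * f x)) :
    ∃ C' R : ℝ, ∀ x : E3, R ≤ ‖x‖ → ∀ i j : Fin 3,
      |(fderiv ℝ (fun y => g y i j) x) (x - a) + 2 * g x i j - 2 * ξ x * g x i j| ≤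
        C' * ‖x‖ ^ (-2 - ε) := by
  obtain rfl : f = conformalFactor m γ₁ γ₂ c := funext fun x => by
    simp [hf, conformalFactor, PiLp.inner_apply, mul_comm]
  set K := 2 * |m| + 4 * |γ₁| * ‖c‖ + 2 * |γ₂|
  set M := 2 * |m| + |γ₁| * ‖c‖ + |γ₂|
  refine ⟨(6 + 2 * K) * C, 2 * M + ‖a‖ + 2, fun x hx i j => ?_⟩
  have hM : 0 ≤ M := by positivity
  have h2 : 2 ≤ ‖x‖ := by linarith [norm_nonneg a]
  have ha : ‖a‖ ≤ ‖x‖ := by linarith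
  have hMx : 2 * M ≤ ‖x‖ := by linarith [norm_nonneg a]
  have hx1 : 1 < ‖x‖ := by linarith
  have hf_pos : 0 < conformalFactor m γ₁ γ₂ c x :=
    one_half_pos.trans_le (half_le_conformalFactor m γ₁ γ₂ c hx1.le hMx)
  have hfd : DifferentiableAt ℝ (conformalFactor m γ₁ γ₂ c) x :=
    (hasFDerivAt_conformalFactor m γ₁ γ₂ c (norm_pos_iff.mp (by linarith))).differentiableAt
  have hpd : DifferentiableAt ℝ (fun y => p y i j) x :=
    ((hpC1 i j).contDiffAt ((isOpen_lt continuous_const continuous_norm).mem_nhds hx1)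
      ).differentiableAt one_ne_zero
  have hgij : (fun y => g y i j) =
      fun y => conformalFactor m γ₁ γ₂ c y * (1 : Matrix (Fin 3) (Fin 3) ℝ) i j + p y i j :=
    funext fun y => by simp [hg]
  rw [hgij, hξ, hg x, Matrix.add_apply, Matrix.smul_apply, smul_eq_mul,
    fderiv_mul_add_sub_conformal hfd hpd hf_pos.ne']
  calc _ ≤ |fderiv ℝ (fun y => p y i j) x (x - a)| + |fderiv ℝ (conformalFactor m γ₁ γ₂ c) x (x - a)
        / conformalFactor m γ₁ γ₂ c x| * |p x i j| := by
        rw [← abs_mul]; exact abs_sub _ _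
    _ ≤ 6 * C * ‖x‖ ^ (-2 - ε) + 2 * K * (C * ‖x‖ ^ (-2 - ε)) :=
        add_le_add (abs_fderiv_apply_sub_le_of_abs_pd_le (by linarith) ha (hp1 x hx1 i j))
          (mul_le_mul (abs_fderiv_conformalFactor_sub_div_le m γ₁ γ₂ c h2 ha hMx) (hp0 x hx1 i j)
            (abs_nonneg _) (by positivity))
    _ = (6 + 2 * K) * C * ‖x‖ ^ (-2 - ε) := by ring

/-- the radial field `X(x) = x − a` is almost conformal for `g = f I + p`:
the entries of `L_X g(x) = (Dg(x))[x−a] + 2g(x)` differ from those of `2ξ(x) g(x)` by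
`O(|x|^{−2−ε})`, where `ξ(x) = 1 + (∇f(x)·(x−a))/(2 f(x))`. -/
theorem radial_field_almost_conformal
    (m γ₁ γ₂ : ℝ) (a c : E3) (ε : ℝ) (hε : 0 ≤ ε)
    (f : E3 → ℝ)
    (hf : ∀ x : E3,
      f x = 1 + 2 * m / ‖x‖ + γ₁ * (∑ i, c i * x i) / ‖x‖ ^ 3 + γ₂ / ‖x‖ ^ 2)
    (p : E3 → Matrix (Fin 3) (Fin 3) ℝ)
    (hpsym : ∀ x : E3, 1 < ‖x‖ → (p x).IsSymm)
    (hpC1 : ∀ i j, ContDiffOn ℝ 1 (fun x => p x i j) {x : E3 | 1 < ‖x‖})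
    (C : ℝ) (hC : 0 < C)
    (hp0 : ∀ x : E3, 1 < ‖x‖ → ∀ i j, |p x i j| ≤ C * ‖x‖ ^ (-2 - ε))
    (hp1 : ∀ x : E3, 1 < ‖x‖ → ∀ i j k,
      |pd k (fun y => p y i j) x| ≤ C * ‖x‖ ^ (-3 - ε))
    (g : E3 → Matrix (Fin 3) (Fin 3) ℝ)
    (hg : ∀ x : E3, g x = f x • (1 : Matrix (Fin 3) (Fin 3) ℝ) + p x)
    (ξ : E3 → ℝ)
    (hξ : ∀ x : E3, ξ x = 1 + (fderiv ℝ f x) (x - a) / (2 * f x)) :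
    ∃ C' R : ℝ, ∀ x : E3, R ≤ ‖x‖ → ∀ i j : Fin 3,
      |(fderiv ℝ (fun y => g y i j) x) (x - a) + 2 * g x i j - 2 * ξ x * g x i j| ≤
        C' * ‖x‖ ^ (-2 - ε) :=
  radial_field_almost_conformal_general m γ₁ γ₂ a c ε f hf p hpC1 C hp0 hp1 g hg ξ hξ
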